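/- arXiv:2502.00786 — 3 statements merged into one kernel-verified Lean document; each statement's English description precedes it below -/
import Mathlib

section
/- Let α ∈ ℝ and x ∈ [−π/2, π/2]. Then: (1) if α ≤ 0, then |1 − cos x − α| ≥ x²/4; (2) if 0 < α < 1 and β = arccos(1−α) ∈ (0, π/2), then |1 − cos x − α| ≥ (1/4)|x−β|·|x+β|; (3) if α ≥ 1, then |1 − cos x − α| ≥ (1/4)|x−π/2|·|x+π/2|. -/
open scoped Real BigOperators ENNReal NNReal
open MeasureTheory

noncomputable section

namespace FPU

/-- `e^{ix}`. -/
def eI (x : ℝ) : ℂ := Complex.exp (Complex.I * x)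

/-- Mesh size `h = π / N`. -/
def msh (N : ℕ) : ℝ := Real.pi / N

/-- Frequency/index set `{-N, …, N-1}` of `𝕋_h` (identified with `(𝕋_h)*`). -/
def dual (N : ℕ) : Finset ℤ := Finset.Icc (-(N : ℤ)) ((N : ℤ) - 1)

/-- Reduction of an integer into `{-N, …, N-1}` modulo `2N`. -/
def red (N : ℕ) (m : ℤ) : ℤ := (m + N) % (2 * N) - N

/-- Complexification of a real lattice function. -/
def cf (f : ℤ → ℝ) : ℤ → ℂ := fun n => (f n : ℂ)

/-- Discrete Fourier coefficient `𝓕_h f (k)` on `𝕋_h`. -/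
def dF (N : ℕ) (f : ℤ → ℂ) (k : ℤ) : ℂ :=
  ((msh N / Real.sqrt (2 * Real.pi) : ℝ) : ℂ) *
    ∑ n ∈ dual N, f n * eI (-(msh N * n * k))

/-- `L²(𝕋_h)` norm. -/
def L2h (N : ℕ) (f : ℤ → ℂ) : ℝ :=
  Real.sqrt (msh N * ∑ n ∈ dual N, ‖f n‖ ^ 2)

/-- `H^s(𝕋_h)` norm. -/
def Hs (N : ℕ) (s : ℝ) (f : ℤ → ℂ) : ℝ :=
  Real.sqrt (∑ k ∈ dual N, (1 + (k : ℝ) ^ 2) ^ s * ‖dF N f k‖ ^ 2)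

/-- `ℍ^s(𝕋_h)` norm of a pair. -/
def HsPair (N : ℕ) (s : ℝ) (f g : ℤ → ℂ) : ℝ :=
  Real.sqrt (Hs N s f ^ 2 + Hs N s g ^ 2)

/-- Fourier multiplier on `𝕋_h` with symbol `m`. -/
def mult (N : ℕ) (m : ℤ → ℂ) (f : ℤ → ℂ) : ℤ → ℂ := fun n =>
  ((1 / Real.sqrt (2 * Real.pi) : ℝ) : ℂ) *
    ∑ k ∈ dual N, m k * dF N f k * eI (msh N * n * k)

/-- Symbol of `∇_h`. -/
def gradSymb (N : ℕ) (k : ℤ) : ℂ :=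
  2 * Complex.I / ((msh N : ℝ) : ℂ) * ((Real.sin (msh N * k / 2) : ℝ) : ℂ)

/-- `∇_h`. -/
def gradh (N : ℕ) : (ℤ → ℂ) → ℤ → ℂ := mult N (gradSymb N)

/-- `∇_h⁻¹` (vanishing at frequency `0`). -/
def gradhInv (N : ℕ) : (ℤ → ℂ) → ℤ → ℂ :=
  mult N fun k => if k = 0 then 0 else (gradSymb N k)⁻¹

/-- The FPU dispersion `s_h(k) = (1/h²)(k - (2/h)sin(hk/2))`. -/
def sh (N : ℕ) (k : ℤ) : ℝ :=
  (1 / msh N ^ 2) * (k - (2 / msh N) * Real.sin (msh N * k / 2))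

/-- Linear FPU propagator `S_h^σ(t)`, the multiplier with symbol `e^{iσt·s_h(k)}`. -/
def Sh (N : ℕ) (σ t : ℝ) : (ℤ → ℂ) → ℤ → ℂ :=
  mult N fun k => eI (σ * t * sh N k)

/-- `e^{σc∂_h}`, the multiplier with symbol `e^{iσck}`. -/
def expDh (N : ℕ) (c : ℝ) : (ℤ → ℂ) → ℤ → ℂ :=
  mult N fun k => eI (c * k)

/-- Coupled FPU integral equation (component with sign `σ`, the other component is `w`). -/
def coupledEq (N : ℕ) (σ T : ℝ) (u0 : ℤ → ℂ) (u w : ℝ → ℤ → ℂ) : Prop :=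
  ∀ t ∈ Set.Icc (-T) T, ∀ n : ℤ,
    u t n = Sh N σ t u0 n - (σ : ℂ) / 4 *
      ∫ t' in (0:ℝ)..t,
        Sh N σ (t - t')
          (gradh N (fun m =>
            (u t' m + expDh N (σ * (2 * t' / msh N ^ 2)) (w t') m) ^ 2)) n

/-- Decoupled FPU integral equation with sign `σ`. -/
def decoupledEq (N : ℕ) (σ T : ℝ) (u0 : ℤ → ℂ) (v : ℝ → ℤ → ℂ) : Prop :=
  ∀ t ∈ Set.Icc (-T) T, ∀ n : ℤ,
    v t n = Sh N σ t u0 n - (σ : ℂ) / 4 *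
      ∫ t' in (0:ℝ)..t, Sh N σ (t - t') (gradh N (fun m => (v t' m) ^ 2)) n

/-- Fourier coefficient on `𝕋 = ℝ/2πℤ`. -/
def tF (f : ℝ → ℂ) (k : ℤ) : ℂ :=
  ((1 / Real.sqrt (2 * Real.pi) : ℝ) : ℂ) *
    ∫ x in (-Real.pi)..Real.pi, f x * eI (-(x * k))

/-- Fourier multiplier on `𝕋`. -/
def tmult (m : ℤ → ℂ) (f : ℝ → ℂ) : ℝ → ℂ := fun x =>
  ((1 / Real.sqrt (2 * Real.pi) : ℝ) : ℂ) * ∑' k : ℤ, m k * tF f k * eI (x * k)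

/-- Airy propagator `S^σ(t)`, multiplier with symbol `e^{iσtk³/24}`. -/
def airy (σ t : ℝ) : (ℝ → ℂ) → ℝ → ℂ :=
  tmult fun k => eI (σ * t * (k : ℝ) ^ 3 / 24)

/-- `∂_x` as a Fourier multiplier on `𝕋`. -/
def tderiv : (ℝ → ℂ) → ℝ → ℂ := tmult fun k => Complex.I * (k : ℂ)

/-- `L²(𝕋)` norm (computed on the Fourier side). -/
def L2T (f : ℝ → ℂ) : ℝ≥0∞ :=
  (∑' k : ℤ, ENNReal.ofReal (‖tF f k‖ ^ 2)) ^ (1/2 : ℝ)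

/-- `H^s(𝕋)` norm. -/
def HsT (s : ℝ) (f : ℝ → ℂ) : ℝ≥0∞ :=
  (∑' k : ℤ, ENNReal.ofReal ((1 + (k : ℝ) ^ 2) ^ s * ‖tF f k‖ ^ 2)) ^ (1/2 : ℝ)

/-- `L²(𝕋)` norm of the sharp frequency projection onto the set `K`. -/
def L2Tproj (K : Set ℤ) (f : ℝ → ℂ) : ℝ≥0∞ :=
  (∑' k : ℤ, ENNReal.ofReal (K.indicator (fun j => ‖tF f j‖ ^ 2) k)) ^ (1/2 : ℝ)

/-- Linear interpolation `𝓛_h` of a lattice function, as a function on `𝕋` (2π-periodic). -/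
def interp (N : ℕ) (f : ℤ → ℂ) : ℝ → ℂ := fun x =>
  f (red N ⌊x / msh N⌋) +
    (f (red N (⌊x / msh N⌋ + 1)) - f (red N ⌊x / msh N⌋)) *
      (((x - msh N * ⌊x / msh N⌋) / msh N : ℝ) : ℂ)

/-- KdV integral equation with sign `σ`. -/
def kdvEq (σ T : ℝ) (w0 : ℝ → ℂ) (w : ℝ → ℝ → ℂ) : Prop :=
  ∀ t ∈ Set.Icc (-T) T, ∀ x : ℝ,
    w t x = airy σ t w0 x - (σ : ℂ) / 4 *
      ∫ t' in (0:ℝ)..t, airy σ (t - t') (tderiv (fun y => (w t' y) ^ 2)) x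

/-- Continuity in `H^s(𝕋)` on `[-T,T]`, together with membership in `H^s`. -/
def contHsT (s T : ℝ) (w : ℝ → ℝ → ℂ) : Prop :=
  ∀ t₀ ∈ Set.Icc (-T) T, HsT s (w t₀) < ⊤ ∧
    ∀ ε : ℝ, 0 < ε → ∃ δ : ℝ, 0 < δ ∧ ∀ t ∈ Set.Icc (-T) T,
      |t - t₀| < δ → HsT s (fun x => w t x - w t₀ x) < ENNReal.ofReal ε

/-- Japanese bracket `⟨x⟩`. -/
def jap (x : ℝ) : ℝ := Real.sqrt (1 + x ^ 2)

/-- Space-time Fourier transform on `ℝ × 𝕋_h`. -/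
def stF (N : ℕ) (u : ℝ → ℤ → ℂ) (τ : ℝ) (k : ℤ) : ℂ :=
  ((msh N / (2 * Real.pi) : ℝ) : ℂ) *
    ∑ n ∈ dual N, ∫ t : ℝ, eI (-(t * τ)) * eI (-(msh N * n * k)) * u t n

/-- Bourgain norm `X^{s,b}_{h,σ}` (with sign `σ = ±1`). -/
def Xnorm (N : ℕ) (σ s b : ℝ) (u : ℝ → ℤ → ℂ) : ℝ≥0∞ :=
  (∑ k ∈ dual N, ∫⁻ τ : ℝ, ENNReal.ofReal
      (jap (k : ℝ) ^ (2 * s) * jap (τ - σ * sh N k) ^ (2 * b) * ‖stF N u τ k‖ ^ 2)) ^ (1/2 : ℝ)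

/-- `Z^s_{h,σ}` norm. -/
def Znorm (N : ℕ) (σ s : ℝ) (u : ℝ → ℤ → ℂ) : ℝ≥0∞ :=
  Xnorm N σ s (-(1/2)) u +
    (∑ k ∈ dual N, (∫⁻ τ : ℝ, ENNReal.ofReal
        (jap (k : ℝ) ^ s * (jap (τ - σ * sh N k))⁻¹ * ‖stF N u τ k‖)) ^ 2) ^ (1/2 : ℝ)

/-- `Y^s_{h,σ}` norm. -/
def Ynorm (N : ℕ) (σ s : ℝ) (u : ℝ → ℤ → ℂ) : ℝ≥0∞ :=
  Xnorm N σ s (1/2) u +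
    (∑ k ∈ dual N, (∫⁻ τ : ℝ, ENNReal.ofReal
        (jap (k : ℝ) ^ s * ‖stF N u τ k‖)) ^ 2) ^ (1/2 : ℝ)

/-- Time restricted norm `Y^{s,T}_{h,σ}` (infimum over extensions). -/
def YnormT (N : ℕ) (σ s T : ℝ) (u : ℝ → ℤ → ℂ) : ℝ≥0∞ :=
  ⨅ g : {g : ℝ → ℤ → ℂ // ∀ t ∈ Set.Icc (-T) T, ∀ n : ℤ, g t n = u t n},
    Ynorm N σ s g.1

/-- `L⁴(ℝ × 𝕋_h)` norm. -/
def L4st (N : ℕ) (u : ℝ → ℤ → ℂ) : ℝ≥0∞ :=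
  (∫⁻ t : ℝ, ENNReal.ofReal (msh N * ∑ n ∈ dual N, ‖u t n‖ ^ 4)) ^ (1/4 : ℝ)

/-- KdV resonance `Ψ²(k,k₁,k₂) = -(1/8)kk₁k₂`. -/
def Psi2 (k k₁ k₂ : ℤ) : ℝ := -(1/8 : ℝ) * (k : ℝ) * (k₁ : ℝ) * (k₂ : ℝ)

/-- KdV cubic resonance `Ψ³ = -(1/8)(a+b)(b+c)(a+c)`. -/
def Psi3 (a b c : ℤ) : ℝ :=
  -(1/8 : ℝ) * (((a + b : ℤ) : ℝ) * ((b + c : ℤ) : ℝ) * ((a + c : ℤ) : ℝ))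

/-- KdV quartic resonance. -/
def Psi4 (k₁ k₂ k₃ k₄ : ℤ) : ℝ := Psi3 (k₁ + k₂) k₃ k₄ + Psi2 (k₁ + k₂) k₁ k₂

/-- FPU resonance `Φ_h²`. -/
def Phi2 (h : ℝ) (k k₁ k₂ : ℤ) : ℝ :=
  -(8 / h ^ 3) *
    (Real.sin (h * k₁ / 4) * Real.sin (h * k₂ / 4) * Real.sin (h * k / 4))

/-- FPU cubic resonance `Φ_h³`. -/
def Phi3 (h : ℝ) (a b c : ℤ) : ℝ :=
  -(8 / h ^ 3) *
    (Real.sin (h * (a + b) / 4) * Real.sin (h * (b + c) / 4) * Real.sin (h * (a + c) / 4))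

/-- FPU quartic resonance `Φ_h⁴`. -/
def Phi4 (h : ℝ) (k₁ k₂ k₃ k₄ : ℤ) : ℝ :=
  Phi3 h (k₁ + k₂) k₃ k₄ + Phi2 h (k₁ + k₂) k₁ k₂

/-- Decoupled FPU profile equation in Fourier variables (sign `σ`), on the time set `I`. -/
def fpuProfileEq (N : ℕ) (σ : ℝ) (u0 : ℤ → ℂ) (V : ℝ → ℤ → ℂ) (I : Set ℝ) : Prop :=
  ∀ t ∈ I, ∀ k ∈ dual N,
    dF N (V t) k = dF N u0 k -
      (σ : ℂ) * Complex.I / (2 * ((msh N : ℝ) : ℂ)) * ((Real.sin (msh N * k / 2) : ℝ) : ℂ) *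
        ∫ t' in (0:ℝ)..t,
          ∑ k₁ ∈ dual N,
            (if k₁ ≠ 0 ∧ k - k₁ ≠ 0 ∧ k - k₁ ∈ dual N then
              eI (σ * t' * Phi2 (msh N) k k₁ (k - k₁)) * dF N (V t') k₁ * dF N (V t') (k - k₁)
            else 0)

/-- KdV profile equation in Fourier variables (sign `σ`), on the time set `I`;
`W t k` denotes the `k`-th Fourier coefficient of the profile at time `t`. -/
def kdvProfileEq (σ : ℝ) (w0 : ℤ → ℂ) (W : ℝ → ℤ → ℂ) (I : Set ℝ) : Prop :=
  ∀ t ∈ I, ∀ k : ℤ,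
    W t k = w0 k -
      (σ : ℂ) * Complex.I * (k : ℂ) / 4 *
        ∫ t' in (0:ℝ)..t,
          ∑' k₁ : ℤ,
            (if k₁ ≠ 0 ∧ k - k₁ ≠ 0 then
              eI (σ * t' * Psi2 k k₁ (k - k₁)) * W t' k₁ * W t' (k - k₁)
            else 0)

/-- `H^s(𝕋)` norm of a Fourier coefficient sequence (extended-real valued). -/
def HsSeq (s : ℝ) (a : ℤ → ℂ) : ℝ≥0∞ :=
  (∑' k : ℤ, ENNReal.ofReal ((1 + (k : ℝ) ^ 2) ^ s * ‖a k‖ ^ 2)) ^ (1/2 : ℝ)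

/-- `H^s(𝕋)` norm of a Fourier coefficient sequence (real valued). -/
def HsSeqR (s : ℝ) (a : ℤ → ℂ) : ℝ :=
  Real.sqrt (∑' k : ℤ, (1 + (k : ℝ) ^ 2) ^ s * ‖a k‖ ^ 2)

/-- `ℓ²(ℤ)` norm of a Fourier coefficient sequence. -/
def l2R (a : ℤ → ℂ) : ℝ := Real.sqrt (∑' k : ℤ, ‖a k‖ ^ 2)

/-- `ℓ²` norm of the projection of a coefficient sequence to the frequency set `K`. -/
def l2projR (K : Set ℤ) (a : ℤ → ℂ) : ℝ :=
  Real.sqrt (∑' k : ℤ, K.indicator (fun j => ‖a j‖ ^ 2) k)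

/-- Periodic discrete Laplacian `Δ_h` on real lattice functions. -/
def lapR (N : ℕ) (f : ℤ → ℝ) (n : ℤ) : ℝ :=
  (f (red N (n + 1)) + f (red N (n - 1)) - 2 * f n) / msh N ^ 2

/-! Write `1 - α = cos β` with `β ∈ [0, π/2]` (`β = arccos (1 - α)`, and `β = 0` resp. `β = π/2`
in the outer cases, where `|1 - cos x - α|` only exceeds `|cos β - cos x|`). Since
`sin t ≥ 2t/π ≥ t/2` on `[0, π/2]`, the even function `cos t + t²/4` decreases in `|t|` there,
which is the inequality `|x² - β²| / 4 ≤ |cos β - cos x|`. -/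

lemma half_le_sin {x : ℝ} (hx₀ : 0 ≤ x) (hx : x ≤ π / 2) : x / 2 ≤ Real.sin x := by
  have h : 1 / 2 ≤ 2 / π := by
    rw [div_le_div_iff₀ two_pos Real.pi_pos]
    linarith [Real.pi_le_four]
  nlinarith [Real.mul_le_sin hx₀ hx]

lemma antitoneOn_cos_add_sq_div_four :
    AntitoneOn (fun x : ℝ => Real.cos x + x ^ 2 / 4) (Set.Icc 0 (π / 2)) := by
  refine antitoneOn_of_deriv_nonpos (convex_Icc _ _) (by fun_prop) (by fun_prop) ?_
  intro x hx
  rw [interior_Icc] at hx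
  have hderiv : deriv (fun x : ℝ => Real.cos x + x ^ 2 / 4) x = -Real.sin x + x / 2 :=
    ((Real.hasDerivAt_cos x).add ((hasDerivAt_pow 2 x).div_const 4)).deriv.trans (by ring)
  linarith [half_le_sin hx.1.le hx.2.le]

lemma sq_sub_sq_div_four_le_cos_sub_cos {y z : ℝ} (hy : 0 ≤ y) (hyz : y ≤ z)
    (hz : z ≤ π / 2) : (z ^ 2 - y ^ 2) / 4 ≤ Real.cos y - Real.cos z := by
  have := antitoneOn_cos_add_sq_div_four ⟨hy, hyz.trans hz⟩ ⟨hy.trans hyz, hz⟩ hyz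
  dsimp only at this
  linarith

lemma abs_sq_sub_sq_div_four_le_abs_cos_sub_cos {x y : ℝ} (hx : |x| ≤ π / 2)
    (hy : |y| ≤ π / 2) : |x ^ 2 - y ^ 2| / 4 ≤ |Real.cos x - Real.cos y| := by
  rw [← Real.cos_abs x, ← Real.cos_abs y, ← sq_abs x, ← sq_abs y]
  rcases le_total |y| |x| with h | h
  · have := sq_sub_sq_div_four_le_cos_sub_cos (abs_nonneg y) h hx
    have hsq : 0 ≤ |x| ^ 2 - |y| ^ 2 := by nlinarith [abs_nonneg y]
    rw [abs_of_nonneg hsq,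
      abs_of_nonpos (a := Real.cos |x| - Real.cos |y|) (by linarith)]
    linarith
  · have := sq_sub_sq_div_four_le_cos_sub_cos (abs_nonneg x) h hy
    have hsq : |x| ^ 2 - |y| ^ 2 ≤ 0 := by nlinarith [abs_nonneg x]
    rw [abs_of_nonpos hsq,
      abs_of_nonneg (a := Real.cos |x| - Real.cos |y|) (by linarith)]
    linarith

lemma abs_sub_mul_abs_add_div_four_le_abs_cos_sub_cos {x y : ℝ} (hx : |x| ≤ π / 2)
    (hy : |y| ≤ π / 2) : 1 / 4 * |x - y| * |x + y| ≤ |Real.cos y - Real.cos x| := by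
  rw [mul_assoc, ← abs_mul, abs_sub_comm (Real.cos y)]
  convert abs_sq_sub_sq_div_four_le_abs_cos_sub_cos hx hy using 1
  ring_nf

/-- lower bounds for `|1 - cos x - α|` on `[-π/2, π/2]`. -/
theorem cos_lower_bounds (α x : ℝ)
    (hx : x ∈ Set.Icc (-(Real.pi / 2)) (Real.pi / 2)) :
    (α ≤ 0 → x ^ 2 / 4 ≤ |1 - Real.cos x - α|) ∧
    (0 < α → α < 1 →
      (1/4) * |x - Real.arccos (1 - α)| * |x + Real.arccos (1 - α)|
        ≤ |1 - Real.cos x - α|) ∧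
    (1 ≤ α →
      (1/4) * |x - Real.pi / 2| * |x + Real.pi / 2| ≤ |1 - Real.cos x - α|) := by
  have hx' : |x| ≤ π / 2 := abs_le.2 hx
  have hcos_le : Real.cos x ≤ 1 := Real.cos_le_one x
  have hcos_nonneg : 0 ≤ Real.cos x := Real.cos_nonneg_of_mem_Icc hx
  refine ⟨fun hα => ?_, fun hα₀ hα₁ => ?_, fun hα => ?_⟩
  · have h := abs_sub_mul_abs_add_div_four_le_abs_cos_sub_cos hx' (y := 0)
      (by rw [abs_zero]; positivity)
    rw [Real.cos_zero, sub_zero, add_zero, mul_assoc, abs_mul_abs_self,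
      abs_of_nonneg (sub_nonneg.2 hcos_le)] at h
    rw [abs_of_nonneg (by linarith)]
    linarith
  · have hβ : |Real.arccos (1 - α)| ≤ π / 2 := by
      rw [abs_of_nonneg (Real.arccos_nonneg _)]
      exact Real.arccos_le_pi_div_two.2 (by linarith)
    have h := abs_sub_mul_abs_add_div_four_le_abs_cos_sub_cos hx' hβ
    rwa [Real.cos_arccos (by linarith) (by linarith), sub_right_comm] at h
  · have hπ : |π / 2| ≤ π / 2 := (abs_of_pos (by positivity)).le
    have h := abs_sub_mul_abs_add_div_four_le_abs_cos_sub_cos hx' hπ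
    rw [Real.cos_pi_div_two, zero_sub, abs_neg, abs_of_nonneg hcos_nonneg] at h
    rw [abs_of_nonpos (a := 1 - Real.cos x - α) (by linarith)]
    linarith

end FPU

end
end

section
/- There is an absolute constant C such that for every t ∈ ℝ, every M > 0, and all f₁, f₂, f₃, f₄ ∈ L²(𝕋): (1) ‖P_{≤M} D₁^±(f₁,f₂)‖_{L²(𝕋)} ≤ C·M^{3/2}·‖f₁‖_{L²(𝕋)}‖f₂‖_{L²(𝕋)}; (2) ‖P_{≥M} D₂^±(f₁,f₂)‖_{L²(𝕋)} ≤ C·M^{−1}·‖f₁‖_{L²(𝕋)}‖f₂‖_{L²(𝕋)}; (3) ‖P_{≥M} D₃^±(f₁,f₂,f₃)‖_{L²(𝕋)} ≤ C·M^{−1/2}·‖f₁‖_{L²(𝕋)}‖f₂‖_{L²(𝕋)}‖f₃‖_{L²(𝕋)}; (4) ‖P_{≥M} D₄^±(f₁,f₂,f₃,f₄)‖_{L²(𝕋)} ≤ C·‖f₁‖_{L²(𝕋)}‖f₂‖_{L²(𝕋)}‖f₃‖_{L²(𝕋)}‖f₄‖_{L²(𝕋)}. -/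
open scoped Real BigOperators ENNReal NNReal
open MeasureTheory

noncomputable section

namespace FPU

/-- Fourier coefficients of `D₁^σ(f₁,f₂)` at time `t` (inputs are coefficient sequences). -/
def D1c (σ t : ℝ) (a b : ℤ → ℂ) (k : ℤ) : ℂ :=
  -(σ : ℂ) * Complex.I * (k : ℂ) / 4 *
    ∑' k₁ : ℤ, (if k₁ ≠ 0 ∧ k - k₁ ≠ 0 then
      eI (σ * t * Psi2 k k₁ (k - k₁)) * a k₁ * b (k - k₁) else 0)

/-- Fourier coefficients of `D₂^σ(f₁,f₂)` at time `t`. -/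
def D2c (σ t : ℝ) (a b : ℤ → ℂ) (k : ℤ) : ℂ :=
  ∑' k₁ : ℤ, (if k₁ ≠ 0 ∧ k - k₁ ≠ 0 then
    (((k : ℝ) / Psi2 k k₁ (k - k₁) : ℝ) : ℂ) *
      eI (σ * t * Psi2 k k₁ (k - k₁)) * a k₁ * b (k - k₁) else 0)

/-- Fourier coefficients of `D₃^σ(f₁,f₂,f₃)` at time `t`. -/
def D3c (σ t : ℝ) (a b c : ℤ → ℂ) (k : ℤ) : ℂ :=
  ∑' p : ℤ × ℤ,
    (if p.1 ≠ 0 ∧ p.2 ≠ 0 ∧ k - p.1 - p.2 ≠ 0 ∧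
        p.1 + p.2 ≠ 0 ∧ p.2 + (k - p.1 - p.2) ≠ 0 ∧ p.1 + (k - p.1 - p.2) ≠ 0 then
      ((2 / ((p.1 : ℝ) * Psi3 p.1 p.2 (k - p.1 - p.2)) : ℝ) : ℂ) *
        eI (σ * t * Psi3 p.1 p.2 (k - p.1 - p.2)) *
        a p.1 * b p.2 * c (k - p.1 - p.2)
    else 0)

/-- Fourier coefficients of `D₄^σ(f₁,f₂,f₃,f₄)` at time `t`. -/
def D4c (σ t : ℝ) (a b c d : ℤ → ℂ) (k : ℤ) : ℂ :=
  ∑' p : ℤ × ℤ × ℤ,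
    (if p.1 * p.2.1 * p.2.2 * (k - p.1 - p.2.1 - p.2.2) ≠ 0 ∧
        (p.1 + p.2.1) * (p.1 + p.2.1 + p.2.2) *
          (p.1 + p.2.1 + (k - p.1 - p.2.1 - p.2.2)) *
          (p.2.2 + (k - p.1 - p.2.1 - p.2.2)) ≠ 0 then
      -(σ : ℂ) * Complex.I / 2 *
        (((2 * ((p.1 + p.2.1 : ℤ) : ℝ) + (p.2.2 : ℝ)) /
            ((p.2.2 : ℝ) * Psi3 (p.1 + p.2.1) p.2.2 (k - p.1 - p.2.1 - p.2.2)) : ℝ) : ℂ) *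
        eI (σ * t * Psi4 p.1 p.2.1 p.2.2 (k - p.1 - p.2.1 - p.2.2)) *
        a p.1 * b p.2.1 * c p.2.2 * d (k - p.1 - p.2.1 - p.2.2)
    else 0)

/-- `ℓ²` norm over frequencies `|k| ≤ M` of a coefficient sequence (extended-real valued). -/
def l2le (M : ℝ) (a : ℤ → ℂ) : ℝ≥0∞ :=
  (∑' k : ℤ, ENNReal.ofReal (if |(k : ℝ)| ≤ M then ‖a k‖ ^ 2 else 0)) ^ (1/2 : ℝ)

/-- `ℓ²` norm over frequencies `|k| ≥ M` of a coefficient sequence. -/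
def l2ge (M : ℝ) (a : ℤ → ℂ) : ℝ≥0∞ :=
  (∑' k : ℤ, ENNReal.ofReal (if M ≤ |(k : ℝ)| then ‖a k‖ ^ 2 else 0)) ^ (1/2 : ℝ)

/-!
Each operator is a weighted convolution of Fourier coefficients. Cauchy–Schwarz over the
frequencies summing to `k` bounds `|𝓕D(k)|²` by the squared `ℓ²` norm of the multiplier on that
fibre times the fibre sum of the squared input coefficients, and summing the latter over `k`
gives `∏ ‖fᵢ‖²`. The multipliers are products of inverse frequencies: `(k/Ψ²)² = 64/(k₁²k₂²)`,
and `1/(x²y²) ≤ 2/(x+y)² · (1/x² + 1/y²)` gives `∑_{k₁} 1/(k₁²(k-k₁)²) ≤ 16/k²`, which yields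
the gains `M⁻¹` and `M^{-1/2}` on `|k| ≥ M` for `D₂` and `D₃`. For `D₁` simply
`|𝓕D₁(k)| ≤ |k| ‖f₁‖ ‖f₂‖` on at most `2M` nonzero frequencies. For `D₄` one first convolves
`f₁` with `f₂`, which is bounded pointwise by `‖f₁‖ ‖f₂‖`; the remaining multiplier, in the
variables `k`, `k₁ + k₂`, `k₃`, is square summable over all three, so no frequency cut-off is
needed.
-/

end FPU

theorem Complex.enorm_real (r : ℝ) : ‖(r : ℂ)‖ₑ = ‖r‖ₑ := by
  rw [← ofReal_norm, ← ofReal_norm, Complex.norm_real]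

theorem Real.enorm_sq_eq_ofReal_sq (x : ℝ) : ‖x‖ₑ ^ 2 = ENNReal.ofReal (x ^ 2) := by
  rw [← ofReal_norm, ← ENNReal.ofReal_pow (norm_nonneg x), Real.norm_eq_abs, sq_abs]

theorem ofReal_norm_sq {E : Type*} [SeminormedAddGroup E] (x : E) :
    ENNReal.ofReal (‖x‖ ^ 2) = ‖x‖ₑ ^ 2 := by
  rw [ENNReal.ofReal_pow (norm_nonneg x), ofReal_norm]

theorem inv_sq_mul_inv_sq_le {x y : ℝ} (h : x + y ≠ 0) :
    (x ^ 2)⁻¹ * (y ^ 2)⁻¹ ≤ 2 * ((x + y) ^ 2)⁻¹ * ((x ^ 2)⁻¹ + (y ^ 2)⁻¹) := by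
  rcases eq_or_ne x 0 with rfl | hx
  · simp; positivity
  rcases eq_or_ne y 0 with rfl | hy
  · simp; positivity
  rw [← sub_nonneg]
  have key : 2 * ((x + y) ^ 2)⁻¹ * ((x ^ 2)⁻¹ + (y ^ 2)⁻¹) - (x ^ 2)⁻¹ * (y ^ 2)⁻¹
      = (x - y) ^ 2 / ((x + y) ^ 2 * x ^ 2 * y ^ 2) := by
    field_simp
    ring
  rw [key]
  positivity

namespace ENNReal

theorem tsum_mul_sq_le {ι : Type*} (f g : ι → ℝ≥0∞) :
    (∑' i, f i * g i) ^ 2 ≤ (∑' i, f i ^ 2) * ∑' i, g i ^ 2 := by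
  let : MeasurableSpace ι := ⊤
  have : MeasurableSingletonClass ι := ⟨fun _ => trivial⟩
  have h := ENNReal.lintegral_mul_le_Lp_mul_Lq Measure.count Real.HolderConjugate.two_two
    measurable_from_top.aemeasurable measurable_from_top.aemeasurable (f := f) (g := g)
  simp only [lintegral_count, Pi.mul_apply, ENNReal.rpow_two] at h
  calc (∑' i, f i * g i) ^ 2
      ≤ ((∑' i, f i ^ 2) ^ (1 / 2 : ℝ) * (∑' i, g i ^ 2) ^ (1 / 2 : ℝ)) ^ 2 := by gcongr
    _ = _ := by
      rw [mul_pow, ← ENNReal.rpow_two, ← ENNReal.rpow_two, ← ENNReal.rpow_mul,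
        ← ENNReal.rpow_mul]
      norm_num

theorem sq_le_of_le_tsum_mul {ι : Type*} {F : ℝ≥0∞} {m g : ι → ℝ≥0∞}
    (h : F ≤ ∑' i, m i * g i) : F ^ 2 ≤ (∑' i, m i ^ 2) * ∑' i, g i ^ 2 :=
  (pow_le_pow_left₀ zero_le h 2).trans (tsum_mul_sq_le m g)

theorem tsum_ite_sq_le_of_kernel_le {κ ι : Type*} (p : κ → Prop) [DecidablePred p]
    {F : κ → ℝ≥0∞} {m g : κ → ι → ℝ≥0∞} {B : ℝ≥0∞} (hF : ∀ k, F k ≤ ∑' i, m k i * g k i)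
    (hm : ∀ k, p k → ∑' i, m k i ^ 2 ≤ B) :
    ∑' k, (if p k then F k ^ 2 else 0) ≤ B * ∑' k, ∑' i, g k i ^ 2 := by
  rw [← ENNReal.tsum_mul_left]
  refine ENNReal.tsum_le_tsum fun k => ?_
  split_ifs with hk
  · exact (sq_le_of_le_tsum_mul (hF k)).trans (mul_le_mul_left (hm k hk) _)
  · exact zero_le

theorem tsum_sq_le_of_input_le {κ ι : Type*} {F : κ → ℝ≥0∞} {m g : κ → ι → ℝ≥0∞}
    {A : ℝ≥0∞} (hF : ∀ k, F k ≤ ∑' i, m k i * g k i) (hg : ∀ k, ∑' i, g k i ^ 2 ≤ A) :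
    ∑' k, F k ^ 2 ≤ (∑' k, ∑' i, m k i ^ 2) * A := by
  rw [← ENNReal.tsum_mul_right]
  exact ENNReal.tsum_le_tsum fun k =>
    (sq_le_of_le_tsum_mul (hF k)).trans (mul_le_mul_right (hg k) _)

theorem tsum_prod_mul {α β : Type*} (f : α → ℝ≥0∞) (g : β → ℝ≥0∞) :
    ∑' p : α × β, f p.1 * g p.2 = (∑' x, f x) * ∑' y, g y := by
  calc ∑' p : α × β, f p.1 * g p.2 = ∑' (x) (y), f x * g y :=
      ENNReal.tsum_prod (f := fun x y => f x * g y)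
    _ = _ := by simp_rw [ENNReal.tsum_mul_left]; exact ENNReal.tsum_mul_right

theorem tsum_tsum_mul_sub_eq {P G : Type*} [AddGroup G] (F : P → ℝ≥0∞) (s : P → G)
    (g : G → ℝ≥0∞) : ∑' k, ∑' p, F p * g (k - s p) = (∑' p, F p) * ∑' k, g k := by
  rw [ENNReal.tsum_comm, ← ENNReal.tsum_mul_right]
  refine tsum_congr fun p => ?_
  rw [ENNReal.tsum_mul_left]
  exact congrArg _ ((Equiv.subRight (s p)).tsum_eq g)

theorem sq_tsum_mul_sub_le {G : Type*} [AddGroup G] (f g : G → ℝ≥0∞) (k : G) :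
    (∑' j, f j * g (k - j)) ^ 2 ≤ (∑' j, f j ^ 2) * ∑' j, g j ^ 2 :=
  (tsum_mul_sq_le _ _).trans_eq <|
    congrArg _ ((Equiv.subLeft k).tsum_eq fun j => g j ^ 2)

theorem tsum_prod_add_eq {G H : Type*} [AddCommGroup G] (f g : G → ℝ≥0∞)
    (Φ : G → H → ℝ≥0∞) :
    ∑' p : G × G × H, f p.1 * g p.2.1 * Φ (p.1 + p.2.1) p.2.2 =
      ∑' q : G × H, (∑' n, f n * g (q.1 - n)) * Φ q.1 q.2 := by
  calc ∑' p : G × G × H, f p.1 * g p.2.1 * Φ (p.1 + p.2.1) p.2.2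
      = ∑' (x) (y) (z), f x * g y * Φ (x + y) z := by
        rw [ENNReal.tsum_prod']; exact tsum_congr fun x => ENNReal.tsum_prod'
    _ = ∑' (x) (K) (z), f x * g (K - x) * Φ K z := tsum_congr fun x => by
        rw [← (Equiv.subRight x).tsum_eq]
        simp [add_sub_cancel]
    _ = ∑' (K) (z) (x), f x * g (K - x) * Φ K z := by
        rw [ENNReal.tsum_comm]; exact tsum_congr fun K => ENNReal.tsum_comm
    _ = _ := by
        rw [ENNReal.tsum_prod']
        exact tsum_congr fun K => tsum_congr fun z => ENNReal.tsum_mul_right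

theorem rpow_half_le_ofReal_mul {X Y c' : ℝ≥0∞} {c : ℝ} (hc : 0 ≤ c)
    (hc' : c' ≤ ENNReal.ofReal (c ^ 2)) (h : X ≤ c' * Y) :
    X ^ (1 / 2 : ℝ) ≤ ENNReal.ofReal c * Y ^ (1 / 2 : ℝ) := by
  calc X ^ (1 / 2 : ℝ) ≤ (ENNReal.ofReal (c ^ 2) * Y) ^ (1 / 2 : ℝ) := by
        gcongr; exact h.trans (by gcongr)
    _ = ENNReal.ofReal c * Y ^ (1 / 2 : ℝ) := by
        rw [ENNReal.mul_rpow_of_nonneg _ _ (by norm_num), ENNReal.ofReal_pow hc,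
          ← ENNReal.rpow_natCast, ← ENNReal.rpow_mul]
        norm_num

end ENNReal

namespace FPU

theorem enorm_eI (x : ℝ) : ‖eI x‖ₑ = 1 := by
  simp [eI, ← ofReal_norm, Complex.norm_exp]

def l2NormSq (a : ℤ → ℂ) : ℝ≥0∞ := ∑' k, ‖a k‖ₑ ^ 2

theorem L2T_eq (f : ℝ → ℂ) : L2T f = l2NormSq (tF f) ^ (1 / 2 : ℝ) := by
  simp only [L2T, l2NormSq, ofReal_norm_sq]

theorem l2le_eq (M : ℝ) (a : ℤ → ℂ) :
    l2le M a = (∑' k : ℤ, if |(k : ℝ)| ≤ M then ‖a k‖ₑ ^ 2 else 0) ^ (1 / 2 : ℝ) := by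
  simp only [l2le, apply_ite ENNReal.ofReal, ofReal_norm_sq, ENNReal.ofReal_zero]

theorem l2ge_eq (M : ℝ) (a : ℤ → ℂ) :
    l2ge M a = (∑' k : ℤ, if M ≤ |(k : ℝ)| then ‖a k‖ₑ ^ 2 else 0) ^ (1 / 2 : ℝ) := by
  simp only [l2ge, apply_ite ENNReal.ofReal, ofReal_norm_sq, ENNReal.ofReal_zero]

/-- `1 / n²`, with the junk value `invSq 0 = 0`: this is what lets the resonance coefficients
below be bounded without case distinctions, since `x / 0 = 0` in `ℝ` as well. -/
def invSq (n : ℤ) : ℝ≥0∞ := ENNReal.ofReal ((n : ℝ) ^ 2)⁻¹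

theorem invSq_le_one (n : ℤ) : invSq n ≤ 1 := by
  rcases eq_or_ne n 0 with rfl | hn
  · simp [invSq]
  · refine ENNReal.ofReal_le_one.2 (inv_le_one_of_one_le₀ ?_)
    have : (1 : ℝ) ≤ |(n : ℝ)| := by exact_mod_cast Int.one_le_abs hn
    nlinarith [sq_abs (n : ℝ)]

theorem invSq_le_ofReal_inv {M : ℝ} {k : ℤ} (hM : 0 < M) (hk : M ≤ |(k : ℝ)|) :
    invSq k ≤ ENNReal.ofReal M⁻¹ := by
  have hk0 : k ≠ 0 := by rintro rfl; simp at hk; linarith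
  have : (1 : ℝ) ≤ |(k : ℝ)| := by exact_mod_cast Int.one_le_abs hk0
  exact ENNReal.ofReal_le_ofReal (inv_anti₀ hM (by nlinarith [sq_abs (k : ℝ)]))

theorem invSq_le_ofReal_inv_sq {M : ℝ} {k : ℤ} (hM : 0 < M) (hk : M ≤ |(k : ℝ)|) :
    invSq k ≤ ENNReal.ofReal (M ^ 2)⁻¹ :=
  ENNReal.ofReal_le_ofReal (inv_anti₀ (by positivity) (by nlinarith [sq_abs (k : ℝ)]))

theorem tsum_nat_invSq_le : ∑' n : ℕ, invSq n ≤ 2 := by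
  calc ∑' n : ℕ, invSq n = ∑' n : ℕ, ENNReal.ofReal (1 / (n : ℝ) ^ 2) := by simp [invSq]
    _ = ENNReal.ofReal (π ^ 2 / 6) := by
      rw [← ENNReal.ofReal_tsum_of_nonneg (fun n => by positivity) hasSum_zeta_two.summable,
        hasSum_zeta_two.tsum_eq]
    _ ≤ 2 := by
      rw [← ENNReal.ofReal_ofNat]
      exact ENNReal.ofReal_le_ofReal (by nlinarith [Real.pi_lt_d2, Real.pi_pos])

theorem tsum_invSq_le : ∑' n, invSq n ≤ 4 := by
  rw [tsum_of_nat_of_neg_add_one ENNReal.summable ENNReal.summable]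
  have hneg : ∑' n : ℕ, invSq (-(n + 1)) ≤ ∑' n : ℕ, invSq n := by
    refine le_of_eq_of_le (tsum_congr fun n => ?_)
      (ENNReal.tsum_comp_le_tsum_of_injective (add_left_injective 1) fun n : ℕ => invSq n)
    simp only [invSq]
    push_cast
    ring_nf
  calc _ ≤ (2 : ℝ≥0∞) + 2 := add_le_add tsum_nat_invSq_le (hneg.trans tsum_nat_invSq_le)
    _ = 4 := by norm_num

theorem tsum_invSq_comp_le {f : ℤ → ℤ} (hf : Function.Injective f) :
    ∑' k, invSq (f k) ≤ 4 :=
  (ENNReal.tsum_comp_le_tsum_of_injective hf invSq).trans tsum_invSq_le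

theorem invSq_mul_invSq_le {x y : ℤ} (h : x + y ≠ 0) :
    invSq x * invSq y ≤ 2 * invSq (x + y) * (invSq x + invSq y) := by
  have h' : (x : ℝ) + y ≠ 0 := by exact_mod_cast h
  simp only [invSq]
  rw [← ENNReal.ofReal_mul (by positivity), ← ENNReal.ofReal_add (by positivity) (by positivity),
    ← ENNReal.ofReal_ofNat 2, ← ENNReal.ofReal_mul (by norm_num),
    ← ENNReal.ofReal_mul (by positivity), Int.cast_add]
  exact ENNReal.ofReal_le_ofReal (inv_sq_mul_inv_sq_le h')

theorem tsum_invSq_mul_invSq_sub_le {k : ℤ} (hk : k ≠ 0) :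
    ∑' j, invSq j * invSq (k - j) ≤ 16 * invSq k := by
  calc ∑' j, invSq j * invSq (k - j)
      ≤ ∑' j, 2 * invSq k * (invSq j + invSq (k - j)) :=
        ENNReal.tsum_le_tsum fun j => by
          simpa using invSq_mul_invSq_le (x := j) (y := k - j) (by simpa using hk)
    _ = 2 * invSq k * (∑' j, invSq j + ∑' j, invSq (k - j)) := by
        rw [ENNReal.tsum_mul_left, ENNReal.tsum_add]
    _ ≤ 2 * invSq k * (4 + 4) := by
        gcongr
        · exact tsum_invSq_le
        · exact tsum_invSq_comp_le sub_right_injective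
    _ = 16 * invSq k := by ring

theorem enorm_D1c_sq_le {σ : ℝ} (hσ : |σ| ≤ 1) (t : ℝ) (a b : ℤ → ℂ) (k : ℤ) :
    ‖D1c σ t a b k‖ₑ ^ 2 ≤ ENNReal.ofReal ((k : ℝ) ^ 2) * (l2NormSq a * l2NormSq b) := by
  have hpre : ‖-(σ : ℂ) * Complex.I * (k : ℂ) / 4‖ₑ ≤ ‖(k : ℝ)‖ₑ := by
    rw [← ofReal_norm, ← ofReal_norm]
    refine ENNReal.ofReal_le_ofReal ?_
    simp only [norm_div, norm_mul, norm_neg, Complex.norm_real, Complex.norm_I,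
      Complex.norm_intCast, Real.norm_eq_abs, mul_one, RCLike.norm_ofNat]
    nlinarith [abs_nonneg (k : ℝ)]
  have hsum : ‖∑' k₁ : ℤ, (if k₁ ≠ 0 ∧ k - k₁ ≠ 0 then
      eI (σ * t * Psi2 k k₁ (k - k₁)) * a k₁ * b (k - k₁) else 0)‖ₑ ≤
      ∑' k₁, ‖a k₁‖ₑ * ‖b (k - k₁)‖ₑ := by
    refine enorm_tsum_le_tsum_enorm.trans (ENNReal.tsum_le_tsum fun k₁ => ?_)
    split_ifs
    · rw [enorm_mul, enorm_mul, enorm_eI, one_mul]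
    · simp
  calc ‖D1c σ t a b k‖ₑ ^ 2 ≤ (‖(k : ℝ)‖ₑ * ∑' k₁, ‖a k₁‖ₑ * ‖b (k - k₁)‖ₑ) ^ 2 := by
        rw [D1c, enorm_mul]; gcongr
    _ ≤ ENNReal.ofReal ((k : ℝ) ^ 2) * (l2NormSq a * l2NormSq b) := by
        rw [mul_pow, Real.enorm_sq_eq_ofReal_sq]
        gcongr
        exact ENNReal.sq_tsum_mul_sub_le (fun j => ‖a j‖ₑ) (fun j => ‖b j‖ₑ) k

theorem tsum_ite_abs_le_ofReal_sq_le {M : ℝ} (hM : 0 ≤ M) :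
    ∑' k : ℤ, (if |(k : ℝ)| ≤ M then ENNReal.ofReal ((k : ℝ) ^ 2) else 0) ≤
      ENNReal.ofReal (2 * M ^ 3) := by
  set n : ℕ := ⌊M⌋₊
  set s : Finset ℤ := (Finset.Icc (-(n : ℤ)) n).erase 0
  have hsupp : ∀ k ∉ s, (if |(k : ℝ)| ≤ M then ENNReal.ofReal ((k : ℝ) ^ 2) else 0) = 0 := by
    intro k hk
    split_ifs with hkM
    · have hkn : k.natAbs ≤ n := Nat.le_floor (by rwa [Nat.cast_natAbs, Int.cast_abs])
      have hk0 : k = 0 := by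
        by_contra h
        exact hk (Finset.mem_erase.2 ⟨h, Finset.mem_Icc.2 ⟨by omega, by omega⟩⟩)
      simp [hk0]
    · rfl
  have hcard : (s.card : ℝ) ≤ 2 * M := by
    have : s.card = 2 * n := by
      rw [Finset.card_erase_of_mem (by simp), Int.card_Icc]
      omega
    rw [this]
    push_cast
    linarith [Nat.floor_le hM]
  rw [tsum_eq_sum hsupp]
  calc ∑ k ∈ s, (if |(k : ℝ)| ≤ M then ENNReal.ofReal ((k : ℝ) ^ 2) else 0)
      ≤ ∑ _k ∈ s, ENNReal.ofReal (M ^ 2) := Finset.sum_le_sum fun k _ => by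
        split_ifs with hkM
        · exact ENNReal.ofReal_le_ofReal (by nlinarith [sq_abs (k : ℝ), abs_nonneg (k : ℝ)])
        · exact zero_le
    _ = ENNReal.ofReal (s.card * M ^ 2) := by
        rw [Finset.sum_const, nsmul_eq_mul, ENNReal.ofReal_mul (by positivity),
          ENNReal.ofReal_natCast]
    _ ≤ ENNReal.ofReal (2 * M ^ 3) :=
        ENNReal.ofReal_le_ofReal (by nlinarith [sq_nonneg M])

theorem tsum_ite_enorm_D1c_sq_le {σ : ℝ} (hσ : |σ| ≤ 1) (t : ℝ) {M : ℝ} (hM : 0 ≤ M)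
    (a b : ℤ → ℂ) :
    ∑' k : ℤ, (if |(k : ℝ)| ≤ M then ‖D1c σ t a b k‖ₑ ^ 2 else 0) ≤
      ENNReal.ofReal (2 * M ^ 3) * (l2NormSq a * l2NormSq b) := by
  calc _ ≤ ∑' k : ℤ, (if |(k : ℝ)| ≤ M then ENNReal.ofReal ((k : ℝ) ^ 2) else 0) *
        (l2NormSq a * l2NormSq b) := ENNReal.tsum_le_tsum fun k => by
          split_ifs
          · exact enorm_D1c_sq_le hσ t a b k
          · simp
    _ ≤ _ := by
      rw [ENNReal.tsum_mul_right]
      gcongr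
      exact tsum_ite_abs_le_ofReal_sq_le hM

theorem sq_div_Psi2 {k : ℤ} (hk : k ≠ 0) (k₁ : ℤ) :
    ((k : ℝ) / Psi2 k k₁ (k - k₁)) ^ 2 = 64 * (((k₁ : ℝ) ^ 2)⁻¹ * (((k - k₁ : ℤ) : ℝ) ^ 2)⁻¹) := by
  have hk' : (k : ℝ) ≠ 0 := by exact_mod_cast hk
  simp only [Psi2, div_eq_mul_inv, mul_inv, inv_pow, mul_pow]
  field_simp
  ring

theorem tsum_enorm_div_Psi2_sq_le {k : ℤ} (hk : k ≠ 0) :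
    ∑' k₁, ‖(k : ℝ) / Psi2 k k₁ (k - k₁)‖ₑ ^ 2 ≤ 1024 * invSq k := by
  calc ∑' k₁, ‖(k : ℝ) / Psi2 k k₁ (k - k₁)‖ₑ ^ 2
      = ∑' k₁, 64 * (invSq k₁ * invSq (k - k₁)) := tsum_congr fun k₁ => by
        rw [Real.enorm_sq_eq_ofReal_sq, sq_div_Psi2 hk, ENNReal.ofReal_mul (by norm_num),
          ENNReal.ofReal_mul (by positivity), ENNReal.ofReal_ofNat]
        rfl
    _ = 64 * ∑' k₁, invSq k₁ * invSq (k - k₁) := ENNReal.tsum_mul_left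
    _ ≤ 64 * (16 * invSq k) := by gcongr; exact tsum_invSq_mul_invSq_sub_le hk
    _ = 1024 * invSq k := by ring

theorem enorm_D2c_le (σ t : ℝ) (a b : ℤ → ℂ) (k : ℤ) :
    ‖D2c σ t a b k‖ₑ ≤ ∑' k₁, ‖(k : ℝ) / Psi2 k k₁ (k - k₁)‖ₑ * (‖a k₁‖ₑ * ‖b (k - k₁)‖ₑ) := by
  refine enorm_tsum_le_tsum_enorm.trans (ENNReal.tsum_le_tsum fun k₁ => ?_)
  split_ifs
  · rw [enorm_mul, enorm_mul, enorm_mul, enorm_eI, Complex.enorm_real, mul_one, mul_assoc]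
  · simp

theorem tsum_tsum_sq_enorm_mul_sub (a b : ℤ → ℂ) :
    ∑' k, ∑' k₁, (‖a k₁‖ₑ * ‖b (k - k₁)‖ₑ) ^ 2 = l2NormSq a * l2NormSq b := by
  simp only [mul_pow]
  exact ENNReal.tsum_tsum_mul_sub_eq (fun k₁ => ‖a k₁‖ₑ ^ 2) (fun k₁ => k₁) (fun j => ‖b j‖ₑ ^ 2)

theorem tsum_ite_enorm_D2c_sq_le (σ t : ℝ) {M : ℝ} (hM : 0 < M) (a b : ℤ → ℂ) :
    ∑' k : ℤ, (if M ≤ |(k : ℝ)| then ‖D2c σ t a b k‖ₑ ^ 2 else 0) ≤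
      ENNReal.ofReal (1024 / M ^ 2) * (l2NormSq a * l2NormSq b) := by
  rw [← tsum_tsum_sq_enorm_mul_sub]
  refine ENNReal.tsum_ite_sq_le_of_kernel_le _ (enorm_D2c_le σ t a b) fun k hk => ?_
  have hk0 : k ≠ 0 := by rintro rfl; simp at hk; linarith
  calc _ ≤ 1024 * invSq k := tsum_enorm_div_Psi2_sq_le hk0
    _ ≤ 1024 * ENNReal.ofReal (M ^ 2)⁻¹ := by gcongr; exact invSq_le_ofReal_inv_sq hM hk
    _ = ENNReal.ofReal (1024 / M ^ 2) := by
      rw [div_eq_mul_inv, ENNReal.ofReal_mul (by norm_num)]; norm_num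

theorem sq_two_div_mul_Psi3_le (k k₁ k₂ : ℤ) :
    (2 / ((k₁ : ℝ) * Psi3 k₁ k₂ (k - k₁ - k₂))) ^ 2 ≤
      256 * (((k₁ : ℝ) ^ 2)⁻¹ * (((k - k₁ : ℤ) : ℝ) ^ 2)⁻¹ * (((k - k₂ : ℤ) : ℝ) ^ 2)⁻¹) := by
  have e₁ : k₂ + (k - k₁ - k₂) = k - k₁ := by ring
  have e₂ : k₁ + (k - k₁ - k₂) = k - k₂ := by ring
  have h : (2 / ((k₁ : ℝ) * Psi3 k₁ k₂ (k - k₁ - k₂))) ^ 2 =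
      256 * (((k₁ : ℝ) ^ 2)⁻¹ * (((k - k₁ : ℤ) : ℝ) ^ 2)⁻¹ * (((k - k₂ : ℤ) : ℝ) ^ 2)⁻¹) *
        (((k₁ + k₂ : ℤ) : ℝ) ^ 2)⁻¹ := by
    simp only [Psi3, e₁, e₂, div_eq_mul_inv, mul_inv, inv_pow, mul_pow]
    ring
  have h₁₂ : (((k₁ + k₂ : ℤ) : ℝ) ^ 2)⁻¹ ≤ 1 := by
    simpa [invSq] using invSq_le_one (k₁ + k₂)
  rw [h]
  exact mul_le_of_le_one_right (by positivity) h₁₂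

theorem tsum_enorm_two_div_mul_Psi3_sq_le {k : ℤ} (hk : k ≠ 0) :
    ∑' p : ℤ × ℤ, ‖2 / ((p.1 : ℝ) * Psi3 p.1 p.2 (k - p.1 - p.2))‖ₑ ^ 2 ≤ 16384 * invSq k := by
  calc ∑' p : ℤ × ℤ, ‖2 / ((p.1 : ℝ) * Psi3 p.1 p.2 (k - p.1 - p.2))‖ₑ ^ 2
      ≤ ∑' p : ℤ × ℤ, 256 * (invSq p.1 * invSq (k - p.1)) * invSq (k - p.2) :=
        ENNReal.tsum_le_tsum fun p => by
          rw [Real.enorm_sq_eq_ofReal_sq]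
          refine (ENNReal.ofReal_le_ofReal (sq_two_div_mul_Psi3_le k p.1 p.2)).trans_eq ?_
          rw [ENNReal.ofReal_mul (by norm_num), ENNReal.ofReal_mul (by positivity),
            ENNReal.ofReal_mul (by positivity), ENNReal.ofReal_ofNat]
          simp only [invSq]
          ring
    _ = 256 * (∑' x, invSq x * invSq (k - x)) * ∑' y, invSq (k - y) := by
      rw [ENNReal.tsum_prod_mul (fun x => 256 * (invSq x * invSq (k - x))) (fun y => invSq (k - y)),
        ENNReal.tsum_mul_left]
    _ ≤ 256 * (16 * invSq k) * 4 := by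
      gcongr
      · exact tsum_invSq_mul_invSq_sub_le hk
      · exact tsum_invSq_comp_le sub_right_injective
    _ = 16384 * invSq k := by ring

theorem enorm_D3c_le (σ t : ℝ) (a b c : ℤ → ℂ) (k : ℤ) :
    ‖D3c σ t a b c k‖ₑ ≤ ∑' p : ℤ × ℤ, ‖2 / ((p.1 : ℝ) * Psi3 p.1 p.2 (k - p.1 - p.2))‖ₑ *
      (‖a p.1‖ₑ * ‖b p.2‖ₑ * ‖c (k - p.1 - p.2)‖ₑ) := by
  refine enorm_tsum_le_tsum_enorm.trans (ENNReal.tsum_le_tsum fun p => ?_)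
  split_ifs
  · rw [enorm_mul, enorm_mul, enorm_mul, enorm_mul, enorm_eI, Complex.enorm_real, mul_one,
      mul_assoc, mul_assoc, mul_assoc]
  · simp

theorem tsum_tsum_sq_enorm_mul_mul_sub (a b c : ℤ → ℂ) :
    ∑' k, ∑' p : ℤ × ℤ, (‖a p.1‖ₑ * ‖b p.2‖ₑ * ‖c (k - p.1 - p.2)‖ₑ) ^ 2 =
      l2NormSq a * (l2NormSq b * l2NormSq c) := by
  simp only [mul_pow, sub_sub, ← mul_assoc]
  rw [ENNReal.tsum_tsum_mul_sub_eq (fun p : ℤ × ℤ => ‖a p.1‖ₑ ^ 2 * ‖b p.2‖ₑ ^ 2)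
    (fun p => p.1 + p.2) (fun j => ‖c j‖ₑ ^ 2),
    ENNReal.tsum_prod_mul (fun x => ‖a x‖ₑ ^ 2) (fun y => ‖b y‖ₑ ^ 2)]
  rfl

theorem tsum_ite_enorm_D3c_sq_le (σ t : ℝ) {M : ℝ} (hM : 0 < M) (a b c : ℤ → ℂ) :
    ∑' k : ℤ, (if M ≤ |(k : ℝ)| then ‖D3c σ t a b c k‖ₑ ^ 2 else 0) ≤
      ENNReal.ofReal (16384 / M) * (l2NormSq a * (l2NormSq b * l2NormSq c)) := by
  rw [← tsum_tsum_sq_enorm_mul_mul_sub]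
  refine ENNReal.tsum_ite_sq_le_of_kernel_le _ (enorm_D3c_le σ t a b c) fun k hk => ?_
  have hk0 : k ≠ 0 := by rintro rfl; simp at hk; linarith
  calc _ ≤ 16384 * invSq k := tsum_enorm_two_div_mul_Psi3_sq_le hk0
    _ ≤ 16384 * ENNReal.ofReal M⁻¹ := by gcongr; exact invSq_le_ofReal_inv hM hk
    _ = ENNReal.ofReal (16384 / M) := by
      rw [div_eq_mul_inv, ENNReal.ofReal_mul (by norm_num)]; norm_num

/-- The coefficient of `D₄` without its prefactor `∓ i / 2`, in the variables `K = k₁ + k₂`,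
`j = k₃`. -/
def quarticCoeff (k K j : ℤ) : ℝ := (2 * (K : ℝ) + j) / ((j : ℝ) * Psi3 K j (k - K - j))

theorem sq_quarticCoeff_half_le (k K j : ℤ) :
    (quarticCoeff k K j / 2) ^ 2 ≤
      128 * (((j : ℝ) ^ 2)⁻¹ * (((k - K : ℤ) : ℝ) ^ 2)⁻¹ * (((k - j : ℤ) : ℝ) ^ 2)⁻¹) +
      32 * ((((K + j : ℤ) : ℝ) ^ 2)⁻¹ * (((k - K : ℤ) : ℝ) ^ 2)⁻¹ *
        (((k - j : ℤ) : ℝ) ^ 2)⁻¹) := by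
  have e₁ : j + (k - K - j) = k - K := by ring
  have e₂ : K + (k - K - j) = k - j := by ring
  simp only [quarticCoeff, Psi3, e₁, e₂]
  push_cast
  set x : ℝ := (j : ℝ)
  set y : ℝ := (K : ℝ) + j
  set u : ℝ := (k : ℝ) - K
  set v : ℝ := (k : ℝ) - j
  have hK : (K : ℝ) = y - x := by simp [x, y]
  rw [hK]
  rcases eq_or_ne x 0 with hx | hx
  · simp [hx]; positivity
  rcases eq_or_ne y 0 with hy | hy
  · simp [hy]; positivity
  -- Writing `2K + j = 2(K + j) - j` splits the coefficient into two products of three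
  -- inverse frequencies.
  have split : (2 * (y - x) + x) / (x * (-(1 / 8) * (y * u * v))) / 2 =
      -4 * (2 * (x * u * v)⁻¹ - (y * u * v)⁻¹) := by
    simp only [div_eq_mul_inv, mul_inv]
    field_simp
    ring
  have hx3 : ((x ^ 2)⁻¹ * (u ^ 2)⁻¹ * (v ^ 2)⁻¹) = ((x * u * v)⁻¹) ^ 2 := by
    simp only [mul_inv, mul_pow, inv_pow]
  have hy3 : ((y ^ 2)⁻¹ * (u ^ 2)⁻¹ * (v ^ 2)⁻¹) = ((y * u * v)⁻¹) ^ 2 := by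
    simp only [mul_inv, mul_pow, inv_pow]
  rw [split, hx3, hy3]
  nlinarith [sq_nonneg (2 * (x * u * v)⁻¹ + (y * u * v)⁻¹)]

theorem enorm_quarticCoeff_half_sq_le (k K j : ℤ) :
    ‖quarticCoeff k K j / 2‖ₑ ^ 2 ≤ 128 * (invSq j * invSq (k - K) * invSq (k - j)) +
      32 * (invSq (K + j) * invSq (k - K) * invSq (k - j)) := by
  rw [Real.enorm_sq_eq_ofReal_sq]
  refine (ENNReal.ofReal_le_ofReal (sq_quarticCoeff_half_le k K j)).trans_eq ?_
  rw [ENNReal.ofReal_add (by positivity) (by positivity)]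
  simp only [invSq, ENNReal.ofReal_mul (by positivity : (0 : ℝ) ≤ 128),
    ENNReal.ofReal_mul (by positivity : (0 : ℝ) ≤ 32), ENNReal.ofReal_ofNat,
    ENNReal.ofReal_mul (inv_nonneg.2 (sq_nonneg _)),
    ENNReal.ofReal_mul (mul_nonneg (inv_nonneg.2 (sq_nonneg _)) (inv_nonneg.2 (sq_nonneg _)))]

theorem tsum_invSq_mul_invSq_sub_mul_invSq_sub_le :
    ∑' k, ∑' q : ℤ × ℤ, invSq q.2 * invSq (k - q.1) * invSq (k - q.2) ≤ 64 := by
  calc _ = ∑' k, (∑' K, invSq (k - K)) * ∑' j, invSq j * invSq (k - j) := tsum_congr fun k => by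
        rw [← ENNReal.tsum_prod_mul]; exact tsum_congr fun q => by ring
    _ ≤ ∑' k, 4 * ∑' j, invSq j * invSq (k - j) := by
        gcongr; exact tsum_invSq_comp_le sub_right_injective
    _ = 4 * ((∑' j, invSq j) * ∑' j, invSq j) := by
        rw [ENNReal.tsum_mul_left, ENNReal.tsum_tsum_mul_sub_eq invSq (fun j => j) invSq]
    _ ≤ 4 * (4 * 4) := by gcongr <;> exact tsum_invSq_le
    _ = 64 := by norm_num

theorem tsum_invSq_add_mul_invSq_sub_mul_invSq_sub_le :
    ∑' k, ∑' q : ℤ × ℤ, invSq (q.1 + q.2) * invSq (k - q.1) * invSq (k - q.2) ≤ 64 := by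
  calc _ = ∑' k, ∑' q : ℤ × ℤ, invSq q.1 * invSq q.2 * invSq (2 * k - q.1 - q.2) :=
        tsum_congr fun k => by
          rw [← (Equiv.prodCongr (Equiv.subLeft k) (Equiv.subLeft k)).tsum_eq]
          refine tsum_congr fun q => ?_
          simp only [Equiv.prodCongr_apply, Prod.map, Equiv.subLeft_apply, sub_sub_cancel]
          rw [show k - q.1 + (k - q.2) = 2 * k - q.1 - q.2 by ring]
          ring
    _ = ∑' q : ℤ × ℤ, invSq q.1 * invSq q.2 * ∑' k, invSq (2 * k - q.1 - q.2) := by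
        rw [ENNReal.tsum_comm]; simp_rw [ENNReal.tsum_mul_left]
    _ ≤ ∑' q : ℤ × ℤ, invSq q.1 * invSq q.2 * 4 := by
        gcongr with q
        exact tsum_invSq_comp_le fun x y h => by omega
    _ = (∑' u, invSq u) * (∑' v, invSq v) * 4 := by
        rw [ENNReal.tsum_mul_right, ENNReal.tsum_prod_mul]
    _ ≤ 4 * 4 * 4 := by gcongr <;> exact tsum_invSq_le
    _ = 64 := by norm_num

theorem tsum_tsum_enorm_quarticCoeff_half_sq_le :
    ∑' k, ∑' q : ℤ × ℤ, ‖quarticCoeff k q.1 q.2 / 2‖ₑ ^ 2 ≤ 10240 := by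
  calc _ ≤ ∑' k, ∑' q : ℤ × ℤ, (128 * (invSq q.2 * invSq (k - q.1) * invSq (k - q.2)) +
          32 * (invSq (q.1 + q.2) * invSq (k - q.1) * invSq (k - q.2))) := by
        gcongr with k q
        exact enorm_quarticCoeff_half_sq_le k q.1 q.2
    _ = 128 * ∑' k, ∑' q : ℤ × ℤ, invSq q.2 * invSq (k - q.1) * invSq (k - q.2) +
          32 * ∑' k, ∑' q : ℤ × ℤ, invSq (q.1 + q.2) * invSq (k - q.1) * invSq (k - q.2) := by
        simp_rw [ENNReal.tsum_add, ENNReal.tsum_mul_left]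
    _ ≤ 128 * 64 + 32 * 64 := by
        gcongr
        · exact tsum_invSq_mul_invSq_sub_mul_invSq_sub_le
        · exact tsum_invSq_add_mul_invSq_sub_mul_invSq_sub_le
    _ = 10240 := by norm_num

theorem enorm_D4c_le {σ : ℝ} (hσ : |σ| ≤ 1) (t : ℝ) (a b c d : ℤ → ℂ) (k : ℤ) :
    ‖D4c σ t a b c d k‖ₑ ≤ ∑' q : ℤ × ℤ, ‖quarticCoeff k q.1 q.2 / 2‖ₑ *
      ((∑' n, ‖a n‖ₑ * ‖b (q.1 - n)‖ₑ) * (‖c q.2‖ₑ * ‖d (k - q.1 - q.2)‖ₑ)) := by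
  have hpre : ∀ r : ℝ, ‖-(σ : ℂ) * Complex.I / 2 * (r : ℂ)‖ₑ ≤ ‖r / 2‖ₑ := fun r => by
    rw [← ofReal_norm, ← ofReal_norm]
    refine ENNReal.ofReal_le_ofReal ?_
    simp only [norm_div, norm_mul, norm_neg, Complex.norm_real, Complex.norm_I,
      Real.norm_eq_abs, mul_one, RCLike.norm_ofNat]
    nlinarith [abs_nonneg r]
  calc ‖D4c σ t a b c d k‖ₑ
      ≤ ∑' p : ℤ × ℤ × ℤ, ‖a p.1‖ₑ * ‖b p.2.1‖ₑ * (‖quarticCoeff k (p.1 + p.2.1) p.2.2 / 2‖ₑ *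
          (‖c p.2.2‖ₑ * ‖d (k - (p.1 + p.2.1) - p.2.2)‖ₑ)) := by
        refine enorm_tsum_le_tsum_enorm.trans (ENNReal.tsum_le_tsum fun p => ?_)
        split_ifs
        · have e : k - p.1 - p.2.1 - p.2.2 = k - (p.1 + p.2.1) - p.2.2 := by ring
          simp only [enorm_mul, enorm_eI, mul_one, e]
          calc _ ≤ ‖quarticCoeff k (p.1 + p.2.1) p.2.2 / 2‖ₑ * ‖a p.1‖ₑ * ‖b p.2.1‖ₑ *
                ‖c p.2.2‖ₑ * ‖d (k - (p.1 + p.2.1) - p.2.2)‖ₑ := by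
                gcongr
                exact (enorm_mul _ _).symm.trans_le (hpre _)
            _ = _ := by ring
        · simp
    _ = _ := by
        rw [ENNReal.tsum_prod_add_eq (fun n => ‖a n‖ₑ) (fun n => ‖b n‖ₑ)
          (fun K j => ‖quarticCoeff k K j / 2‖ₑ * (‖c j‖ₑ * ‖d (k - K - j)‖ₑ))]
        exact tsum_congr fun q => by ring

theorem tsum_sq_conv_mul_enorm_mul_sub_le (a b c d : ℤ → ℂ) (k : ℤ) :
    ∑' q : ℤ × ℤ, ((∑' n, ‖a n‖ₑ * ‖b (q.1 - n)‖ₑ) * (‖c q.2‖ₑ * ‖d (k - q.1 - q.2)‖ₑ)) ^ 2 ≤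
      l2NormSq a * l2NormSq b * (l2NormSq c * l2NormSq d) := by
  calc _ ≤ ∑' q : ℤ × ℤ, l2NormSq a * l2NormSq b * (‖c q.2‖ₑ ^ 2 * ‖d (k - q.1 - q.2)‖ₑ ^ 2) := by
        gcongr with q
        rw [mul_pow, mul_pow]
        gcongr
        exact ENNReal.sq_tsum_mul_sub_le (fun n => ‖a n‖ₑ) (fun n => ‖b n‖ₑ) q.1
    _ = l2NormSq a * l2NormSq b * (l2NormSq c * l2NormSq d) := by
        rw [ENNReal.tsum_mul_left, ENNReal.tsum_prod', ← (Equiv.subLeft k).tsum_eq]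
        simp only [Equiv.subLeft_apply, sub_sub_cancel]
        rw [ENNReal.tsum_tsum_mul_sub_eq (fun j => ‖c j‖ₑ ^ 2) (fun j => j) (fun j => ‖d j‖ₑ ^ 2)]
        rfl

theorem tsum_enorm_D4c_sq_le {σ : ℝ} (hσ : |σ| ≤ 1) (t : ℝ) (a b c d : ℤ → ℂ) :
    ∑' k, ‖D4c σ t a b c d k‖ₑ ^ 2 ≤
      10240 * (l2NormSq a * (l2NormSq b * (l2NormSq c * l2NormSq d))) := by
  rw [← mul_assoc (l2NormSq a)]
  exact (ENNReal.tsum_sq_le_of_input_le (enorm_D4c_le hσ t a b c d)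
    (tsum_sq_conv_mul_enorm_mul_sub_le a b c d)).trans
    (by gcongr; exact tsum_tsum_enorm_quarticCoeff_half_sq_le)

/-- multilinear estimates for the normal-form operators on `𝕋`. -/
theorem multilinear_estimates :
    ∃ C : ℝ, 0 < C ∧ ∀ σ : ℝ, σ = 1 ∨ σ = -1 → ∀ t : ℝ, ∀ M : ℝ, 0 < M →
      ∀ f₁ f₂ f₃ f₄ : ℝ → ℂ,
        L2T f₁ < ⊤ → L2T f₂ < ⊤ → L2T f₃ < ⊤ → L2T f₄ < ⊤ →
        l2le M (D1c σ t (tF f₁) (tF f₂))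
            ≤ ENNReal.ofReal (C * M ^ ((3:ℝ)/2)) * L2T f₁ * L2T f₂ ∧
        l2ge M (D2c σ t (tF f₁) (tF f₂))
            ≤ ENNReal.ofReal (C * M ^ (-(1:ℝ))) * L2T f₁ * L2T f₂ ∧
        l2ge M (D3c σ t (tF f₁) (tF f₂) (tF f₃))
            ≤ ENNReal.ofReal (C * M ^ (-(1:ℝ)/2)) * L2T f₁ * L2T f₂ * L2T f₃ ∧
        l2ge M (D4c σ t (tF f₁) (tF f₂) (tF f₃) (tF f₄))
            ≤ ENNReal.ofReal C * L2T f₁ * L2T f₂ * L2T f₃ * L2T f₄ := by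
  refine ⟨128, by norm_num, fun σ hσ t M hM f₁ f₂ f₃ f₄ _ _ _ _ => ?_⟩
  have hσ' : |σ| ≤ 1 := by rcases hσ with rfl | rfl <;> simp
  have hsq : ∀ s : ℝ, (128 * M ^ s) ^ 2 = 16384 * M ^ (s * 2) := fun s => by
    rw [mul_pow, ← Real.rpow_natCast (M ^ s), ← Real.rpow_mul hM.le]; norm_num
  simp only [l2le_eq, l2ge_eq, L2T_eq, mul_assoc,
    ← ENNReal.mul_rpow_of_nonneg _ _ (by norm_num : (0 : ℝ) ≤ 1 / 2)]
  refine ⟨?_, ?_, ?_, ?_⟩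
  · refine ENNReal.rpow_half_le_ofReal_mul (by positivity) (ENNReal.ofReal_le_ofReal ?_)
      (tsum_ite_enorm_D1c_sq_le hσ' t hM.le _ _)
    rw [hsq, show (3 : ℝ) / 2 * 2 = (3 : ℕ) by norm_num, Real.rpow_natCast]
    nlinarith [pow_pos hM 3]
  · refine ENNReal.rpow_half_le_ofReal_mul (by positivity) (ENNReal.ofReal_le_ofReal ?_)
      (tsum_ite_enorm_D2c_sq_le σ t hM _ _)
    rw [hsq, show -(1 : ℝ) * 2 = -(2 : ℕ) by norm_num, Real.rpow_neg hM.le, Real.rpow_natCast,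
      div_eq_mul_inv]
    gcongr; norm_num
  · refine ENNReal.rpow_half_le_ofReal_mul (by positivity) (ENNReal.ofReal_le_ofReal ?_)
      (tsum_ite_enorm_D3c_sq_le σ t hM _ _ _)
    rw [hsq, show -(1 : ℝ) / 2 * 2 = -1 by norm_num, Real.rpow_neg_one, div_eq_mul_inv]
  · refine ENNReal.rpow_half_le_ofReal_mul (by norm_num) ?_
      ((ENNReal.tsum_le_tsum fun k => ?_).trans (tsum_enorm_D4c_sq_le hσ' t _ _ _ _))
    · rw [← ENNReal.ofReal_ofNat]; exact ENNReal.ofReal_le_ofReal (by norm_num)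
    · split_ifs <;> simp

end FPU

end
end

section
/- Let 0 < h ≤ 1, 0 ≤ α ≤ 1, t ∈ ℝ, and let k, k₁, k₂ be integers with k = k₁ + k₂, k·k₁·k₂ ≠ 0, and |k|, |k₁|, |k₂| ≤ π/h. Define 𝓜_{h,1}^{2,±}(t,k,k₁,k₂) = (k/Ψ²(k,k₁,k₂))·e^{±itΨ²(k,k₁,k₂)} − (8·sin³(hk/2)/(h³k²·Φ_h²(k,k₁,k₂)))·e^{±itΦ_h²(k,k₁,k₂)}. Then there is an absolute constant C (independent of h, t, α, k, k₁, k₂) such that |𝓜_{h,1}^{2,±}(t,k,k₁,k₂)| ≤ C·(h^α·(1+|t|^α)/|k₁k₂|)·(|k·k₁·k₂|·max(|k|,|k₁|,|k₂|))^α (for either choice of sign). -/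
open scoped Real BigOperators ENNReal NNReal
open MeasureTheory

noncomputable section

/-
Put `x = h k / 4` and likewise `x₁`, `x₂`. Then `Φ_h² = Ψ² · sinc x sinc x₁ sinc x₂`, and the FPU
amplitude is the KdV amplitude `k / Ψ²` (of size `8 / |k₁ k₂|`) times
`sinc² x cos³ x / (sinc x₁ sinc x₂)`. For `|x|, |x₁|, |x₂| ≤ π / 4` both correction factors are
`1 + O((h max |kⱼ|)²)`. Hence the multiplier is `8 / |k₁ k₂|` times a factor that is bounded and
also `O(h (1 + |t|) |k k₁ k₂| max |kⱼ|)`, and `min (1, X) ≤ X ^ α` gives the bound.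
-/

namespace Real

lemma mul_sinc (x : ℝ) : x * sinc x = sin x := by
  rcases eq_or_ne x 0 with rfl | hx
  · simp
  · rw [sinc_of_ne_zero hx]; field_simp

lemma one_sub_sinc_le (x : ℝ) : 1 - sinc x ≤ x ^ 2 / 6 := by
  rcases eq_or_ne x 0 with rfl | hx
  · simp
  have hx' : 0 < |x| := abs_pos.mpr hx
  calc 1 - sinc x = (x - sin x) / x := by rw [sinc_of_ne_zero hx]; field_simp
    _ ≤ |x - sin x| / |x| := by rw [← abs_div]; exact le_abs_self _
    _ ≤ |x| ^ 3 / 6 / |x| := by gcongr; exact abs_sub_sin_le x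
    _ = x ^ 2 / 6 := by rw [← sq_abs x]; field_simp

lemma abs_one_sub_sinc_mul_sinc_mul_sinc_le (x y z : ℝ) :
    |1 - sinc x * sinc y * sinc z| ≤ (x ^ 2 + y ^ 2 + z ^ 2) / 6 := by
  have hyz : |sinc y * sinc z| ≤ 1 := by
    rw [abs_mul]; exact mul_le_one₀ (abs_sinc_le_one y) (abs_nonneg _) (abs_sinc_le_one z)
  have hxyz : |sinc x * sinc y * sinc z| ≤ 1 := by
    rw [mul_assoc, abs_mul]; exact mul_le_one₀ (abs_sinc_le_one x) (abs_nonneg _) hyz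
  rw [abs_of_nonneg (by linarith [le_abs_self (sinc x * sinc y * sinc z)])]
  nlinarith [one_sub_sinc_le x, one_sub_sinc_le y, one_sub_sinc_le z, sinc_le_one x,
    sinc_le_one y, sinc_le_one z, le_abs_self (sinc y * sinc z)]

lemma two_thirds_le_sinc_mul_sinc {x y : ℝ} (hx : x ^ 2 ≤ 1) (hy : y ^ 2 ≤ 1) :
    2 / 3 ≤ sinc x * sinc y := by
  nlinarith [one_sub_sinc_le x, one_sub_sinc_le y]

end Real

open Real

lemma one_sub_mul_le_add {a b : ℝ} (ha : a ≤ 1) (hb : b ≤ 1) :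
    1 - a * b ≤ (1 - a) + (1 - b) := by
  nlinarith [mul_nonneg (sub_nonneg.2 ha) (sub_nonneg.2 hb)]

lemma one_sub_pow_le_mul {a : ℝ} (ha : -1 ≤ a) (n : ℕ) : 1 - a ^ n ≤ n * (1 - a) := by
  have := one_add_mul_le_pow (a := a - 1) (by linarith) n
  rw [add_sub_cancel] at this
  linarith

lemma le_mul_rpow_of_le_of_le_mul {d C X α : ℝ} (hd : 0 ≤ d) (hC : d ≤ C) (hX : d ≤ C * X)
    (hX0 : 0 ≤ X) (hα0 : 0 ≤ α) (hα1 : α ≤ 1) : d ≤ C * X ^ α := by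
  rcases le_total X 1 with hX1 | hX1
  · exact hX.trans (mul_le_mul_of_nonneg_left (self_le_rpow_of_le_one hX0 hX1 hα1) (hd.trans hC))
  · exact hC.trans (le_mul_of_one_le_right (hd.trans hC) (one_le_rpow hX1 hα0))

lemma sq_mul_div_four_le {h j m : ℝ} (hh : 0 ≤ h) (hj : |j| ≤ m) :
    (h * j / 4) ^ 2 ≤ (h * m / 4) ^ 2 := by
  rw [← sq_abs, abs_div, abs_mul, abs_of_nonneg hh, abs_of_pos (four_pos : (0 : ℝ) < 4)]
  exact pow_le_pow_left₀ (by positivity) (by gcongr) 2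

lemma rpow_mul_one_add_abs_mul_le {h t Y α : ℝ} (hh : 0 ≤ h) (hY : 0 ≤ Y) (hα0 : 0 ≤ α)
    (hα1 : α ≤ 1) : (h * (1 + |t|) * Y) ^ α ≤ h ^ α * (1 + |t| ^ α) * Y ^ α := by
  rw [mul_rpow (by positivity) hY, mul_rpow hh (by positivity)]
  gcongr
  simpa using rpow_add_le_add_rpow zero_le_one (abs_nonneg t) hα0 hα1

lemma abs_sinc_sq_mul_cos_cube_le_one (x : ℝ) : |sinc x ^ 2 * cos x ^ 3| ≤ 1 := by
  rw [abs_mul, abs_pow, abs_pow]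
  exact mul_le_one₀ (pow_le_one₀ (abs_nonneg _) (abs_sinc_le_one x)) (by positivity)
    (pow_le_one₀ (abs_nonneg _) (abs_cos_le_one x))

section SincRatio

variable {x x₁ x₂ ε : ℝ}

lemma abs_sinc_ratio_le (hx₁ : x₁ ^ 2 ≤ ε) (hx₂ : x₂ ^ 2 ≤ ε) (hε : ε ≤ 1) :
    |sinc x ^ 2 * cos x ^ 3 / (sinc x₁ * sinc x₂)| ≤ 3 / 2 := by
  have hQ := two_thirds_le_sinc_mul_sinc (hx₁.trans hε) (hx₂.trans hε)
  have hP := abs_sinc_sq_mul_cos_cube_le_one x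
  rw [abs_div, abs_of_pos (show 0 < sinc x₁ * sinc x₂ by linarith), div_le_iff₀ (by linarith)]
  linarith

lemma abs_one_sub_sinc_ratio_le (hx : x ^ 2 ≤ ε) (hx₁ : x₁ ^ 2 ≤ ε) (hx₂ : x₂ ^ 2 ≤ ε)
    (hε : ε ≤ 1) :
    |1 - sinc x ^ 2 * cos x ^ 3 / (sinc x₁ * sinc x₂)| ≤ 4 * ε := by
  have hP := (abs_le.1 (abs_sinc_sq_mul_cos_cube_le_one x)).2
  have hQ₁ : sinc x₁ * sinc x₂ ≤ 1 := (le_abs_self _).trans <| by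
    rw [abs_mul]; exact mul_le_one₀ (abs_sinc_le_one _) (abs_nonneg _) (abs_sinc_le_one _)
  have hdefect_P : 1 - sinc x ^ 2 * cos x ^ 3 ≤ 2 * (1 - sinc x) + 3 * (1 - cos x) := by
    have hf := neg_one_le_sinc x
    have hc := neg_one_le_cos x
    calc 1 - sinc x ^ 2 * cos x ^ 3 ≤ (1 - sinc x ^ 2) + (1 - cos x ^ 3) :=
          one_sub_mul_le_add (by nlinarith [sinc_le_one x]) ((le_abs_self _).trans
            (by rw [abs_pow]; exact pow_le_one₀ (abs_nonneg _) (abs_cos_le_one x)))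
      _ ≤ 2 * (1 - sinc x) + 3 * (1 - cos x) := by
          have := one_sub_pow_le_mul hf 2
          have := one_sub_pow_le_mul hc 3
          push_cast at *
          linarith
  have hdefect_Q : 1 - sinc x₁ * sinc x₂ ≤ (1 - sinc x₁) + (1 - sinc x₂) :=
    one_sub_mul_le_add (sinc_le_one _) (sinc_le_one _)
  have hf := one_sub_sinc_le x
  have hf₁ := one_sub_sinc_le x₁
  have hf₂ := one_sub_sinc_le x₂
  have hc : 1 - cos x ≤ x ^ 2 / 2 := by linarith [one_sub_sq_div_two_le_cos (x := x)]
  have hQ₀ : 0 < sinc x₁ * sinc x₂ := by linarith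
  rw [one_sub_div hQ₀.ne', abs_div, abs_of_pos hQ₀, div_le_iff₀ hQ₀, abs_le]
  constructor <;> nlinarith

end SincRatio

namespace FPU

lemma norm_eI (x : ℝ) : ‖eI x‖ = 1 := by
  rw [eI, mul_comm, Complex.norm_exp_ofReal_mul_I]

lemma norm_eI_sub_eI_le (a b : ℝ) : ‖eI a - eI b‖ ≤ |a - b| := by
  have h : eI a - eI b = eI b * (eI (a - b) - 1) := by
    simp only [eI, mul_sub, ← Complex.exp_add]
    push_cast
    ring_nf
  rw [h, norm_mul, norm_eI, one_mul]
  exact norm_exp_I_mul_ofReal_sub_one_le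

lemma norm_eI_sub_mul_eI_le (a b g : ℝ) : ‖eI a - g * eI b‖ ≤ |1 - g| + |g| * |a - b| :=
  calc ‖eI a - g * eI b‖ = ‖((1 - g : ℝ) : ℂ) * eI a + g * (eI a - eI b)‖ := by
        push_cast; ring_nf
    _ ≤ |1 - g| + |g| * |a - b| := by
        refine (norm_add_le _ _).trans (add_le_add ?_ ?_)
        · rw [norm_mul, norm_eI, mul_one, Complex.norm_real, Real.norm_eq_abs]
        · rw [norm_mul, Complex.norm_real, Real.norm_eq_abs]
          exact mul_le_mul_of_nonneg_left (norm_eI_sub_eI_le a b) (abs_nonneg g)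

lemma norm_eI_sub_mul_eI_le_one_add (a b g : ℝ) : ‖eI a - g * eI b‖ ≤ 1 + |g| := by
  refine (norm_sub_le _ _).trans_eq ?_
  rw [norm_mul, norm_eI, norm_eI, mul_one, Complex.norm_real, Real.norm_eq_abs]

def sincProd (h : ℝ) (k k₁ k₂ : ℤ) : ℝ := sinc (h * k / 4) * sinc (h * k₁ / 4) * sinc (h * k₂ / 4)

def ampRatio (h : ℝ) (k k₁ k₂ : ℤ) : ℝ :=
  sinc (h * k / 4) ^ 2 * cos (h * k / 4) ^ 3 / (sinc (h * k₁ / 4) * sinc (h * k₂ / 4))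

lemma abs_Psi2 (k k₁ k₂ : ℤ) : |Psi2 k k₁ k₂| = |(k : ℝ) * k₁ * k₂| / 8 := by
  rw [Psi2, show -(1 / 8 : ℝ) * k * k₁ * k₂ = -((k * k₁ * k₂) / 8) by ring, abs_neg, abs_div,
    abs_of_pos (by norm_num : (0 : ℝ) < 8)]

lemma abs_div_Psi2 {k : ℤ} (hk : (k : ℝ) ≠ 0) (k₁ k₂ : ℤ) :
    |(k : ℝ) / Psi2 k k₁ k₂| = 8 / |(k₁ : ℝ) * k₂| := by
  rw [show (k : ℝ) / Psi2 k k₁ k₂ = -8 / ((k₁ : ℝ) * k₂) by rw [Psi2]; field_simp, abs_div,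
    abs_neg, abs_of_pos (by norm_num : (0 : ℝ) < 8)]

lemma Phi2_eq_Psi2_mul_sincProd {h : ℝ} (hh : h ≠ 0) (k k₁ k₂ : ℤ) :
    Phi2 h k k₁ k₂ = Psi2 k k₁ k₂ * sincProd h k k₁ k₂ := by
  simp only [Phi2, Psi2, sincProd, ← mul_sinc]
  field_simp
  ring

lemma fpu_amplitude_eq {h : ℝ} (hh : h ≠ 0) {k : ℤ} (hk : (k : ℝ) ≠ 0) (k₁ k₂ : ℤ) :
    8 * sin (h * k / 2) ^ 3 / (h ^ 3 * (k : ℝ) ^ 2 * Phi2 h k k₁ k₂) =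
      k / Psi2 k k₁ k₂ * ampRatio h k k₁ k₂ := by
  have hsin : sin (h * k / 2) = 2 * (h * k / 4 * sinc (h * k / 4)) * cos (h * k / 4) := by
    rw [mul_sinc, ← sin_two_mul]; ring_nf
  rw [Phi2_eq_Psi2_mul_sincProd hh, hsin, ampRatio, sincProd, div_mul_div_comm]
  rcases eq_or_ne (sinc (h * k / 4)) 0 with hf | hf
  · simp [hf]
  have hc : h ^ 3 * (k : ℝ) ^ 2 * sinc (h * k / 4) ≠ 0 := by positivity
  rw [← mul_div_mul_left (k * (sinc (h * k / 4) ^ 2 * cos (h * k / 4) ^ 3))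
    (Psi2 k k₁ k₂ * (sinc (h * k₁ / 4) * sinc (h * k₂ / 4))) hc]
  congr 1 <;> ring

lemma M2_one_eq {h : ℝ} (hh : h ≠ 0) {k : ℤ} (hk : (k : ℝ) ≠ 0) (k₁ k₂ : ℤ) (σ t : ℝ) :
    (((k : ℝ) / Psi2 k k₁ k₂ : ℝ) : ℂ) * eI (σ * t * Psi2 k k₁ k₂) -
        ((8 * sin (h * k / 2) ^ 3 / (h ^ 3 * (k : ℝ) ^ 2 * Phi2 h k k₁ k₂) : ℝ) : ℂ) *
          eI (σ * t * Phi2 h k k₁ k₂) =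
      (((k : ℝ) / Psi2 k k₁ k₂ : ℝ) : ℂ) * (eI (σ * t * Psi2 k k₁ k₂) -
        ampRatio h k k₁ k₂ * eI (σ * t * (Psi2 k k₁ k₂ * sincProd h k k₁ k₂))) := by
  rw [fpu_amplitude_eq hh hk, Phi2_eq_Psi2_mul_sincProd hh, Complex.ofReal_mul]
  ring

section

variable {h ε σ m : ℝ} {k k₁ k₂ : ℤ}

lemma abs_phase_sub_le (hσ : |σ| = 1) (hx : (h * k / 4) ^ 2 ≤ ε) (hx₁ : (h * k₁ / 4) ^ 2 ≤ ε)
    (hx₂ : (h * k₂ / 4) ^ 2 ≤ ε) (t : ℝ) :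
    |σ * t * Psi2 k k₁ k₂ - σ * t * (Psi2 k k₁ k₂ * sincProd h k k₁ k₂)| ≤
      |t| * (|(k : ℝ) * k₁ * k₂| / 8) * (ε / 2) := by
  have hF := abs_one_sub_sinc_mul_sinc_mul_sinc_le (h * k / 4) (h * k₁ / 4) (h * k₂ / 4)
  rw [show σ * t * Psi2 k k₁ k₂ - σ * t * (Psi2 k k₁ k₂ * sincProd h k k₁ k₂) =
      σ * t * Psi2 k k₁ k₂ * (1 - sincProd h k k₁ k₂) by ring,
    abs_mul, abs_mul, abs_mul, hσ, one_mul, abs_Psi2, sincProd]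
  gcongr
  linarith

lemma norm_M2_factor_le_one_add (hx₁ : (h * k₁ / 4) ^ 2 ≤ ε) (hx₂ : (h * k₂ / 4) ^ 2 ≤ ε)
    (hε : ε ≤ 1) (a b : ℝ) : ‖eI a - ampRatio h k k₁ k₂ * eI b‖ ≤ 5 / 2 := by
  have hg : |ampRatio h k k₁ k₂| ≤ 3 / 2 := abs_sinc_ratio_le hx₁ hx₂ hε
  linarith [norm_eI_sub_mul_eI_le_one_add a b (ampRatio h k k₁ k₂)]

lemma norm_M2_factor_le (hσ : |σ| = 1) (hx : (h * k / 4) ^ 2 ≤ ε)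
    (hx₁ : (h * k₁ / 4) ^ 2 ≤ ε) (hx₂ : (h * k₂ / 4) ^ 2 ≤ ε) (hε : ε ≤ 1) (t : ℝ) :
    ‖eI (σ * t * Psi2 k k₁ k₂) -
        ampRatio h k k₁ k₂ * eI (σ * t * (Psi2 k k₁ k₂ * sincProd h k k₁ k₂))‖ ≤
      4 * ε + 3 / 2 * (|t| * (|(k : ℝ) * k₁ * k₂| / 8) * (ε / 2)) :=
  (norm_eI_sub_mul_eI_le _ _ _).trans <| by
    gcongr
    · exact abs_one_sub_sinc_ratio_le hx hx₁ hx₂ hε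
    · exact abs_sinc_ratio_le hx₁ hx₂ hε
    · exact abs_phase_sub_le hσ hx hx₁ hx₂ t

lemma norm_M2_factor_le_rpow (hh : 0 < h) (hσ : |σ| = 1) (hk : |(k : ℝ)| ≤ m)
    (hk₁ : |(k₁ : ℝ)| ≤ m) (hk₂ : |(k₂ : ℝ)| ≤ m) (hm : h * m ≤ π)
    (hK : 1 ≤ |(k : ℝ) * k₁ * k₂|) {α : ℝ} (hα0 : 0 ≤ α) (hα1 : α ≤ 1) (t : ℝ) :
    ‖eI (σ * t * Psi2 k k₁ k₂) -
        ampRatio h k k₁ k₂ * eI (σ * t * (Psi2 k k₁ k₂ * sincProd h k k₁ k₂))‖ ≤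
      5 / 2 * (h * (1 + |t|) * (|(k : ℝ) * k₁ * k₂| * m)) ^ α := by
  have hm₀ : 0 ≤ m := (abs_nonneg _).trans hk
  have hε : (h * m / 4) ^ 2 ≤ h * m / 4 :=
    pow_le_of_le_one (by positivity) (by linarith [pi_le_four]) two_ne_zero
  have hε₁ : (h * m / 4) ^ 2 ≤ 1 := hε.trans (by linarith [pi_le_four])
  have hx := sq_mul_div_four_le hh.le hk
  have hx₁ := sq_mul_div_four_le hh.le hk₁
  have hx₂ := sq_mul_div_four_le hh.le hk₂
  refine le_mul_rpow_of_le_of_le_mul (norm_nonneg _) (norm_M2_factor_le_one_add hx₁ hx₂ hε₁ _ _)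
    ((norm_M2_factor_le hσ hx hx₁ hx₂ hε₁ t).trans ?_) (by positivity) hα0 hα1
  have h₁ := le_mul_of_one_le_right (by positivity : 0 ≤ h * m) hK
  have h₂ := mul_le_mul_of_nonneg_left hε (by positivity : 0 ≤ |t| * |(k : ℝ) * k₁ * k₂|)
  nlinarith [abs_nonneg t, mul_nonneg (abs_nonneg t) (abs_nonneg ((k : ℝ) * k₁ * k₂))]

end

/-- bound for the multiplier `𝓜_{h,1}^{2,±}`. -/
theorem M2_one_bound :
    ∃ C : ℝ, 0 < C ∧ ∀ h : ℝ, 0 < h → h ≤ 1 → ∀ α : ℝ, 0 ≤ α → α ≤ 1 →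
      ∀ t σ : ℝ, σ = 1 ∨ σ = -1 →
      ∀ k k₁ k₂ : ℤ, k = k₁ + k₂ → k * k₁ * k₂ ≠ 0 →
        |(k : ℝ)| ≤ Real.pi / h → |(k₁ : ℝ)| ≤ Real.pi / h → |(k₂ : ℝ)| ≤ Real.pi / h →
        ‖(((k : ℝ) / Psi2 k k₁ k₂ : ℝ) : ℂ) * eI (σ * t * Psi2 k k₁ k₂) -
            ((8 * Real.sin (h * k / 2) ^ 3 / (h ^ 3 * (k : ℝ) ^ 2 * Phi2 h k k₁ k₂) : ℝ) : ℂ) *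
              eI (σ * t * Phi2 h k k₁ k₂)‖
          ≤ C * (h ^ α * (1 + |t| ^ α) / |(k₁ : ℝ) * (k₂ : ℝ)|) *
              (|(k : ℝ) * (k₁ : ℝ) * (k₂ : ℝ)| *
                max |(k : ℝ)| (max |(k₁ : ℝ)| |(k₂ : ℝ)|)) ^ α := by
  refine ⟨20, by norm_num, ?_⟩
  intro h hh _ α hα0 hα1 t σ hσ k k₁ k₂ _ hne hkπ hk₁π hk₂π
  have hK : (1 : ℝ) ≤ |(k : ℝ) * k₁ * k₂| := by exact_mod_cast Int.one_le_abs hne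
  have hk : (k : ℝ) ≠ 0 := by rintro h0; norm_num [h0] at hK
  have hσ₁ : |σ| = 1 := by rcases hσ with rfl | rfl <;> simp
  set m := max |(k : ℝ)| (max |(k₁ : ℝ)| |(k₂ : ℝ)|)
  have hm : h * m ≤ π := by
    rw [mul_comm, ← le_div_iff₀ hh]; exact max_le hkπ (max_le hk₁π hk₂π)
  have hD := norm_M2_factor_le_rpow hh hσ₁ (le_max_left _ _)
    ((le_max_left _ _).trans (le_max_right _ _)) ((le_max_right _ _).trans (le_max_right _ _))
    hm hK hα0 hα1 t
  rw [M2_one_eq hh.ne' hk, norm_mul, Complex.norm_real, Real.norm_eq_abs, abs_div_Psi2 hk]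
  calc _ ≤ 8 / |(k₁ : ℝ) * k₂| *
        (5 / 2 * (h ^ α * (1 + |t| ^ α) * (|(k : ℝ) * k₁ * k₂| * m) ^ α)) := by
        gcongr
        exact hD.trans (by gcongr; exact rpow_mul_one_add_abs_mul_le hh.le (by positivity) hα0 hα1)
    _ = _ := by ring

end FPU

end
end
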